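/- For all a with 0 < a < 1/√2, the function δ₂(a) = (4·sinh((1/2)·arccosh((3 - 2a²)/(2(1-a²)))) - (2a² - 1)/√(1-a²))/π satisfies 2√2/π < δ₂(a) < 3/π. -/

import Mathlib

open Real

/-- The inverse hyperbolic cosine on [1,∞). -/
noncomputable def arcosh (x : ℝ) : ℝ := Real.log (x + Real.sqrt (x^2 - 1))

/-- The density function of type-2 hyp-hor packings in the hyperbolic plane. -/
noncomputable def δ₂ (a : ℝ) : ℝ :=
  (4 * Real.sinh ((1/2) * _root_.arcosh ((3 - 2 * a^2) / (2 * (1 - a^2))))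
    - (2 * a^2 - 1) / Real.sqrt (1 - a^2)) / π

/-!
With `c = √(1 - a²)` the argument of `arcosh` is `1 + 1 / (2c²)`, so the half-angle formula gives
`sinh (½ arcosh ·) = 1 / (2c)` and `π δ₂(a) = 2c + 1/c`. For `0 < a < 1/√2` we have
`1/√2 < c < 1`, and on that interval `2c + 1/c` increases from its minimum `2√2` (at
`c = 1/√2`) to `3`.
-/

lemma sinh_half_arcosh {x : ℝ} (hx : 1 ≤ x) :
    sinh ((1/2) * _root_.arcosh x) = √((x - 1) / 2) := by
  -- `cosh (2y) = 1 + 2 sinh² y`, and `sinh y ≥ 0` because `arcosh ≥ 0`.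
  set y := (1/2) * _root_.arcosh x
  have hy : 0 ≤ y := mul_nonneg (by norm_num) (Real.arcosh_nonneg hx)
  have hcosh : cosh (2 * y) = x := by
    rw [show 2 * y = Real.arcosh x by simp only [y, _root_.arcosh, Real.arcosh]; ring]
    exact Real.cosh_arcosh hx
  rw [cosh_two_mul, cosh_sq] at hcosh
  rw [show (x - 1) / 2 = sinh y ^ 2 by linarith, sqrt_sq (sinh_nonneg_iff.mpr hy)]

lemma two_sqrt_two_lt_two_mul_add_inv {c : ℝ} (hc : 0 < c) (hne : c ^ 2 ≠ 1 / 2) :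
    2 * √2 < 2 * c + c⁻¹ := by
  have hsq : √2 ^ 2 = 2 := sq_sqrt (by norm_num)
  have hgap : 0 < (√2 * c - 1) ^ 2 := by
    refine pow_two_pos_of_ne_zero fun h ↦ hne ?_
    nlinarith
  have hdiff : 2 * c + c⁻¹ - 2 * √2 = (√2 * c - 1) ^ 2 / c := by
    field_simp
    linear_combination -c ^ 2 * hsq
  rw [← sub_pos, hdiff]
  exact div_pos hgap hc

lemma two_mul_add_inv_lt_three {c : ℝ} (h1 : 1 / 2 < c) (h2 : c < 1) : 2 * c + c⁻¹ < 3 := by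
  have hc : 0 < c := by linarith
  have hdiff : 2 * c + c⁻¹ - 3 = (2 * c - 1) * (c - 1) / c := by field_simp; ring
  rw [← sub_neg, hdiff]
  exact div_neg_of_neg_of_pos (mul_neg_of_pos_of_neg (by linarith) (by linarith)) hc

lemma δ₂_eq_two_mul_add_inv {a : ℝ} (ha : a ^ 2 < 1) :
    δ₂ a = (2 * √(1 - a ^ 2) + (√(1 - a ^ 2))⁻¹) / π := by
  rw [δ₂]
  set c := √(1 - a ^ 2)
  have hc : 0 < c := sqrt_pos.mpr (by linarith)
  have hc2 : c ^ 2 = 1 - a ^ 2 := sq_sqrt (by linarith)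
  have hx : 1 ≤ (3 - 2 * a ^ 2) / (2 * (1 - a ^ 2)) := by
    rw [le_div_iff₀ (by linarith)]
    linarith
  have hsinh : sinh ((1/2) * _root_.arcosh ((3 - 2 * a ^ 2) / (2 * (1 - a ^ 2)))) = (2 * c)⁻¹ := by
    rw [sinh_half_arcosh hx, ← hc2, ← sqrt_sq (inv_nonneg.mpr (by positivity : (0 : ℝ) ≤ 2 * c))]
    congr 1
    field_simp
    linear_combination -2 * hc2
  rw [hsinh]
  congr 1
  field_simp
  linear_combination -4 * hc2

/-- For `0 < a < 1/√2` we have `2√2/π < δ₂ a < 3/π`. -/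
theorem delta2_bounds (a : ℝ) (h0 : 0 < a) (h1 : a < 1 / Real.sqrt 2) :
    2 * Real.sqrt 2 / π < δ₂ a ∧ δ₂ a < 3 / π := by
  have ha : a ^ 2 < 1 / 2 := by
    simpa [div_pow] using pow_lt_pow_left₀ h1 h0.le two_ne_zero
  have hc2 : √(1 - a ^ 2) ^ 2 = 1 - a ^ 2 := sq_sqrt (by linarith)
  have hc : 1 / 2 < √(1 - a ^ 2) := by nlinarith [sqrt_nonneg (1 - a ^ 2)]
  have hc1 : √(1 - a ^ 2) < 1 := by nlinarith [sqrt_nonneg (1 - a ^ 2)]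
  rw [δ₂_eq_two_mul_add_inv (by linarith)]
  exact ⟨div_lt_div_of_pos_right
      (two_sqrt_two_lt_two_mul_add_inv (by linarith) (by linarith)) pi_pos,
    div_lt_div_of_pos_right (two_mul_add_inv_lt_three hc hc1) pi_pos⟩
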